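/- arXiv:2308.13493 — 7 statements merged into one kernel-verified Lean document; each statement's English description precedes it below -/
import Mathlib

section
/- There is an absolute constant C > 0 such that for every z in the upper half-plane ℍ with Im z ≥ 1/10 and every X > 0, the set {γ ∈ SL₂(ℤ) : u(z, γ·z) < X} is finite with cardinality at most C·(√(X(X+1))·Im z + X + 1), and the set {γ ∈ SL₂(ℤ) : u(z, γ·(−z̄)) < X} is finite with cardinality at most C·(√(X(X+1))·Im z + X + 1), where −z̄ denotes the reflection of z across the imaginary axis and γ acts by Möbius transformations. -/
open scoped MatrixGroups

/-- The point-pair invariant `u(z₁,z₂) = |z₁-z₂|² / (4 Im z₁ Im z₂)` on the upper half-plane. -/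
noncomputable def ptPair (z₁ z₂ : UpperHalfPlane) : ℝ :=
  ‖(z₁ : ℂ) - (z₂ : ℂ)‖^2 / (4 * z₁.im * z₂.im)

/-- The reflection `z ↦ -z̄` across the imaginary axis. -/
noncomputable def reflUHP (z : UpperHalfPlane) : UpperHalfPlane :=
  ⟨-(starRingEnd ℂ) (z : ℂ), by simpa using z.2⟩

/-!
Write `γ = !![a, b; c, d]`, `D = c w + d` and `N = a w + b`, so that `γ • w = N / D` and
`Im (γ • w) = Im w / |D|²`. When `Im w = Im z = y`, the condition `u(z, γ • w) < X` reads
`|z D - N| < 2 √X y`, and comparing imaginary parts alone forces `|D| < √X + √(X + 1) =: ρ`.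
Two matrices with the same bottom row differ by a power `Tⁿ`, which shifts `N` by `n D`, so each
bottom row contributes at most `8 √X y / |D| + 1` elements. Since `y ≥ 1/10`, the lattice
`ℤ w + ℤ` has `O(t²)` points of norm at most `t`, and a dyadic decomposition gives
`∑_{0 < |D| ≤ ρ} 1 / |D| = O(ρ)`. The count is therefore `O(√X ρ y + ρ²)`.
-/

open UpperHalfPlane ModularGroup Finset

namespace HyperbolicLatticeCount

noncomputable def latticePt (w : ℍ) : ℤ × ℤ →+ ℂ :=
  AddMonoidHom.mk' (fun p => p.1 * (w : ℂ) + p.2) fun p q => by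
    simp only [Prod.fst_add, Prod.snd_add]
    push_cast
    ring

def topRow (γ : SL(2, ℤ)) : ℤ × ℤ := (γ 0 0, γ 0 1)

def botRow (γ : SL(2, ℤ)) : ℤ × ℤ := (γ 1 0, γ 1 1)

section Lattice

variable (w : ℍ) (p : ℤ × ℤ)

lemma latticePt_apply : latticePt w p = p.1 * (w : ℂ) + p.2 := rfl

lemma re_latticePt : (latticePt w p).re = p.1 * w.re + p.2 := by
  simp [latticePt_apply]

lemma im_latticePt : (latticePt w p).im = p.1 * w.im := by
  simp [latticePt_apply]

lemma abs_fst_mul_im_le_norm_latticePt : |(p.1 : ℝ)| * w.im ≤ ‖latticePt w p‖ :=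
  calc |(p.1 : ℝ)| * w.im = |(latticePt w p).im| := by
        rw [im_latticePt, abs_mul, abs_of_pos w.im_pos]
    _ ≤ ‖latticePt w p‖ := Complex.abs_im_le_norm _

variable {p}

lemma min_one_im_le_norm_latticePt (hp : p ≠ 0) : min 1 w.im ≤ ‖latticePt w p‖ := by
  rcases eq_or_ne p.1 0 with h1 | h1
  · have h2 : p.2 ≠ 0 := fun h2 => hp (Prod.ext h1 h2)
    have hpt : latticePt w p = p.2 := by simp [latticePt_apply, h1]
    rw [hpt, Complex.norm_intCast]
    exact (min_le_left _ _).trans (mod_cast Int.one_le_abs h2)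
  · refine (min_le_right _ _).trans (le_trans ?_ (abs_fst_mul_im_le_norm_latticePt w p))
    exact le_mul_of_one_le_left w.im_pos.le (mod_cast Int.one_le_abs h1)

lemma latticePt_ne_zero (hp : p ≠ 0) : latticePt w p ≠ 0 :=
  norm_pos_iff.1 <| (lt_min one_pos w.im_pos).trans_le (min_one_im_le_norm_latticePt w hp)

end Lattice

lemma botRow_ne_zero (γ : SL(2, ℤ)) : botRow γ ≠ 0 := by
  intro h
  simp only [botRow, Prod.ext_iff, Prod.fst_zero, Prod.snd_zero] at h
  have hdet := γ.det_coe
  rw [Matrix.det_fin_two, h.1, h.2] at hdet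
  simp at hdet

lemma coe_smul_eq_div (γ : SL(2, ℤ)) (w : ℍ) :
    ((γ • w : ℍ) : ℂ) = latticePt w (topRow γ) / latticePt w (botRow γ) := by
  rw [coe_specialLinearGroup_apply]
  simp [latticePt_apply, topRow, botRow]

lemma im_smul_eq_div (γ : SL(2, ℤ)) (w : ℍ) :
    (γ • w).im = w.im / ‖latticePt w (botRow γ)‖ ^ 2 := by
  rw [ModularGroup.im_smul_eq_div_normSq, ModularGroup.denom_apply, Complex.normSq_eq_norm_sq]
  simp [latticePt_apply, botRow]

lemma ptPair_smul_eq (z w : ℍ) (γ : SL(2, ℤ)) :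
    ptPair z (γ • w) =
      ‖z * latticePt w (botRow γ) - latticePt w (topRow γ)‖ ^ 2 / (4 * z.im * w.im) := by
  have hD := latticePt_ne_zero w (botRow_ne_zero γ)
  have hsub : (z : ℂ) - ((γ • w : ℍ) : ℂ) =
      (z * latticePt w (botRow γ) - latticePt w (topRow γ)) / latticePt w (botRow γ) := by
    rw [coe_smul_eq_div]
    field_simp
  rw [ptPair, hsub, im_smul_eq_div, norm_div, div_pow]
  have := w.im_pos
  field_simp

lemma sq_sub_div_le_ptPair (z v : ℍ) : (z.im - v.im) ^ 2 / (4 * z.im * v.im) ≤ ptPair z v := by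
  have := z.im_pos
  have := v.im_pos
  have him : |z.im - v.im| ≤ ‖(z : ℂ) - v‖ := by
    simpa using Complex.abs_im_le_norm ((z : ℂ) - v)
  rw [ptPair, ← sq_abs]
  gcongr

lemma lt_add_sqrt_of_sq_sub_one_lt {a s : ℝ} (h : s ^ 2 - 1 < 2 * a * s) :
    s < a + √(a ^ 2 + 1) := by
  have : s - a < √(a ^ 2 + 1) := by
    rcases lt_or_ge (s - a) 0 with hneg | hnonneg
    · exact hneg.trans_le (Real.sqrt_nonneg _)
    · rw [Real.lt_sqrt hnonneg]
      linarith
  linarith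

lemma ptPair_smul_lt_iff {z w : ℍ} (hw : w.im = z.im) {X : ℝ} (hX : 0 ≤ X) (γ : SL(2, ℤ)) :
    ptPair z (γ • w) < X ↔
      ‖z * latticePt w (botRow γ) - latticePt w (topRow γ)‖ < 2 * √X * z.im := by
  have := z.im_pos
  rw [ptPair_smul_eq, hw, div_lt_iff₀ (by positivity),
    ← sq_lt_sq₀ (norm_nonneg _) (by positivity)]
  rw [mul_pow, mul_pow, Real.sq_sqrt hX]
  constructor <;> intro h <;> linarith

lemma norm_latticePt_botRow_lt {z w : ℍ} (hw : w.im = z.im) {X : ℝ} (hX : 0 ≤ X)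
    {γ : SL(2, ℤ)} (h : ptPair z (γ • w) < X) :
    ‖latticePt w (botRow γ)‖ < √X + √(X + 1) := by
  set s := ‖latticePt w (botRow γ)‖
  have hs : 0 < s := norm_pos_iff.2 (latticePt_ne_zero w (botRow_ne_zero γ))
  have hy := z.im_pos
  have hlt := (sq_sub_div_le_ptPair z (γ • w)).trans_lt h
  rw [im_smul_eq_div, hw] at hlt
  have hsq : (s ^ 2 - 1) ^ 2 < (2 * √X * s) ^ 2 := by
    have hsimp : (z.im - z.im / s ^ 2) ^ 2 / (4 * z.im * (z.im / s ^ 2)) =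
        (s ^ 2 - 1) ^ 2 / (4 * s ^ 2) := by
      field_simp
    rw [hsimp, div_lt_iff₀ (by positivity)] at hlt
    rw [mul_pow, mul_pow, Real.sq_sqrt hX]
    linarith
  have hquad : s ^ 2 - 1 < 2 * √X * s :=
    (le_abs_self _).trans_lt (abs_lt_of_sq_lt_sq hsq (by positivity))
  simpa [Real.sq_sqrt hX] using lt_add_sqrt_of_sq_sub_one_lt hquad

lemma topRow_T_zpow_mul (n : ℤ) (γ : SL(2, ℤ)) :
    topRow (T ^ n * γ) = topRow γ + n • botRow γ := by
  simp [topRow, botRow, coe_T_zpow, Matrix.mul_apply, Fin.sum_univ_two]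

/-- `γ γ₀⁻¹` fixes `∞`, so it is a power of `T`; the exponent is its upper right entry. -/
lemma exists_eq_T_zpow_mul_of_botRow_eq {γ γ₀ : SL(2, ℤ)} (h : botRow γ = botRow γ₀) :
    ∃ n : ℤ, γ = T ^ n * γ₀ := by
  simp only [botRow, Prod.ext_iff] at h
  have hdet := γ.det_coe
  have hdet₀ := γ₀.det_coe
  rw [Matrix.det_fin_two, h.1, h.2] at hdet
  rw [Matrix.det_fin_two] at hdet₀
  refine ⟨γ 0 1 * γ₀ 0 0 - γ 0 0 * γ₀ 0 1, ?_⟩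
  ext i j
  fin_cases i <;> fin_cases j <;>
    simp [coe_T_zpow, Matrix.mul_apply, Fin.sum_univ_two, h.1, h.2]
  · linear_combination γ₀ 0 0 * hdet - γ 0 0 * hdet₀
  · linear_combination γ₀ 0 1 * hdet - γ 0 1 * hdet₀

lemma mem_Icc_floor_of_abs_le {k : ℤ} {A : ℝ} (h : |(k : ℝ)| ≤ A) : k ∈ Icc (-⌊A⌋) ⌊A⌋ :=
  Finset.mem_Icc.2 (abs_le.1 (Int.le_floor.2 (mod_cast h)))

lemma card_Icc_floor_le {A : ℝ} (hA : 0 ≤ A) : (#(Icc (-⌊A⌋) ⌊A⌋) : ℝ) ≤ 2 * A + 1 := by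
  have h0 := Int.floor_nonneg.2 hA
  have hcard : (#(Icc (-⌊A⌋) ⌊A⌋) : ℤ) = 2 * ⌊A⌋ + 1 := by
    rw [Int.card_Icc, Int.toNat_of_nonneg (by omega)]
    ring
  have hcard' : (#(Icc (-⌊A⌋) ⌊A⌋) : ℝ) = 2 * ⌊A⌋ + 1 := by exact_mod_cast hcard
  linarith [Int.floor_le A]

def fiberInDisc (w : ℍ) (p : ℤ × ℤ) (ζ : ℂ) (r : ℝ) : Set SL(2, ℤ) :=
  {γ | botRow γ = p ∧ ‖ζ - latticePt w (topRow γ)‖ < r}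

lemma fiberInDisc_subset_image {w : ℍ} {ζ : ℂ} {r : ℝ} {γ₀ : SL(2, ℤ)}
    (hγ₀ : ‖ζ - latticePt w (topRow γ₀)‖ < r) :
    fiberInDisc w (botRow γ₀) ζ r ⊆
      (Icc (-⌊2 * r / ‖latticePt w (botRow γ₀)‖⌋) ⌊2 * r / ‖latticePt w (botRow γ₀)‖⌋).image
        (T ^ · * γ₀) := by
  rintro γ ⟨hrow, hγ⟩
  obtain ⟨n, rfl⟩ := exists_eq_T_zpow_mul_of_botRow_eq hrow
  have hD := norm_pos_iff.2 (latticePt_ne_zero w (botRow_ne_zero γ₀))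
  refine Finset.mem_coe.2 (Finset.mem_image_of_mem _ (mem_Icc_floor_of_abs_le ?_))
  have hshift : (n : ℂ) * latticePt w (botRow γ₀) =
      (ζ - latticePt w (topRow γ₀)) - (ζ - latticePt w (topRow (T ^ n * γ₀))) := by
    rw [topRow_T_zpow_mul, map_add, map_zsmul, zsmul_eq_mul]
    ring
  rw [le_div_iff₀ hD]
  calc |(n : ℝ)| * ‖latticePt w (botRow γ₀)‖
      = ‖(n : ℂ) * latticePt w (botRow γ₀)‖ := by rw [norm_mul, Complex.norm_intCast]
    _ ≤ ‖ζ - latticePt w (topRow γ₀)‖ + ‖ζ - latticePt w (topRow (T ^ n * γ₀))‖ :=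
        hshift ▸ norm_sub_le _ _
    _ ≤ 2 * r := by linarith

lemma finite_fiberInDisc_and_ncard_le (w : ℍ) (p : ℤ × ℤ) (ζ : ℂ) {r : ℝ} (hr : 0 ≤ r) :
    (fiberInDisc w p ζ r).Finite ∧
      ((fiberInDisc w p ζ r).ncard : ℝ) ≤ 4 * r / ‖latticePt w p‖ + 1 := by
  rcases (fiberInDisc w p ζ r).eq_empty_or_nonempty with h | ⟨γ₀, hp, hγ₀⟩
  · rw [h, Set.ncard_empty, Nat.cast_zero]
    exact ⟨Set.finite_empty, by positivity⟩
  subst hp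
  have hsub := fiberInDisc_subset_image hγ₀
  refine ⟨(Finset.finite_toSet _).subset hsub, ?_⟩
  set A := 2 * r / ‖latticePt w (botRow γ₀)‖
  calc ((fiberInDisc w (botRow γ₀) ζ r).ncard : ℝ) ≤ #(Icc (-⌊A⌋) ⌊A⌋) := by
        norm_cast
        exact ((Set.ncard_le_ncard hsub (Finset.finite_toSet _)).trans_eq
          (Set.ncard_coe_finset _)).trans Finset.card_image_le
    _ ≤ 2 * A + 1 := card_Icc_floor_le (by positivity)
    _ = 4 * r / ‖latticePt w (botRow γ₀)‖ + 1 := by ring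

noncomputable def shear (x : ℝ) (p : ℤ × ℤ) : ℤ × ℤ := (p.1, p.2 + round (p.1 * x))

lemma shear_injective (x : ℝ) : Function.Injective (shear x) := by
  intro p q h
  simp only [shear, Prod.mk.injEq] at h
  obtain ⟨h1, h2⟩ := h
  rw [h1, add_left_inj] at h2
  exact Prod.ext h1 h2

lemma shear_mem_box {w : ℍ} {p : ℤ × ℤ} {t : ℝ} (h : ‖latticePt w p‖ ≤ t) :
    shear w.re p ∈ Icc (-⌊t / w.im⌋) ⌊t / w.im⌋ ×ˢ Icc (-⌊t + 1 / 2⌋) ⌊t + 1 / 2⌋ := by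
  refine Finset.mem_product.2 ⟨mem_Icc_floor_of_abs_le ?_, mem_Icc_floor_of_abs_le ?_⟩
  · rw [le_div_iff₀ w.im_pos]
    exact (abs_fst_mul_im_le_norm_latticePt w p).trans h
  · have hre : |(p.1 * w.re + p.2 : ℝ)| ≤ t := by
      rw [← re_latticePt]
      exact (Complex.abs_re_le_norm _).trans h
    have hround := abs_sub_round ((p.1 : ℝ) * w.re)
    simp only [shear, Int.cast_add]
    calc |(p.2 : ℝ) + round ((p.1 : ℝ) * w.re)|
        = |(p.1 * w.re + p.2) - (p.1 * w.re - round ((p.1 : ℝ) * w.re))| := by ring_nf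
      _ ≤ |(p.1 * w.re + p.2 : ℝ)| + |p.1 * w.re - round ((p.1 : ℝ) * w.re)| := abs_sub _ _
      _ ≤ t + 1 / 2 := by linarith

lemma finite_setOf_norm_latticePt_le (w : ℍ) (t : ℝ) : {p | ‖latticePt w p‖ ≤ t}.Finite :=
  ((Finset.finite_toSet _).preimage (shear_injective w.re).injOn).subset
    fun _ hp => shear_mem_box hp

lemma card_le_of_norm_latticePt_le {w : ℍ} {t : ℝ} (ht : 0 ≤ t) {s : Finset (ℤ × ℤ)}
    (hs : ∀ p ∈ s, ‖latticePt w p‖ ≤ t) : (#s : ℝ) ≤ (2 * (t / w.im) + 1) * (2 * t + 2) := by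
  have hcard := card_le_card_of_injOn (shear w.re) (fun p hp => shear_mem_box (hs p hp))
    (shear_injective w.re).injOn
  rw [card_product] at hcard
  have := w.im_pos
  calc (#s : ℝ)
      ≤ #(Icc (-⌊t / w.im⌋) ⌊t / w.im⌋) * #(Icc (-⌊t + 1 / 2⌋) ⌊t + 1 / 2⌋) := by
        exact_mod_cast hcard
    _ ≤ (2 * (t / w.im) + 1) * (2 * (t + 1 / 2) + 1) :=
        mul_le_mul (card_Icc_floor_le (by positivity)) (card_Icc_floor_le (by positivity))
          (by positivity) (by positivity)
    _ = (2 * (t / w.im) + 1) * (2 * t + 2) := by ring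

/-- Dyadic decomposition: split off the terms with `f s > ρ / 2` and recurse on the rest. -/
lemma sum_inv_le_of_card_le_sq {α : Type*} (S : Finset α) (f : α → ℝ) {m K ρ : ℝ} (hm : 0 < m)
    (hK : 0 ≤ K) (hmρ : m ≤ ρ) (hf : ∀ s ∈ S, m ≤ f s ∧ f s ≤ ρ)
    (hcard : ∀ T ⊆ S, ∀ t, m ≤ t → (∀ s ∈ T, f s ≤ t) → (#T : ℝ) ≤ K * t ^ 2) :
    ∑ s ∈ S, (f s)⁻¹ ≤ 4 * K * ρ := by
  obtain ⟨n, hn⟩ := pow_unbounded_of_one_lt (ρ / m) one_lt_two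
  rw [div_lt_iff₀ hm] at hn
  induction n generalizing S ρ with
  | zero => linarith
  | succ n ih =>
    rw [← sum_filter_add_sum_filter_not S (f · ≤ ρ / 2)]
    have hρ := hm.trans_le hmρ
    have hsmall : ∑ s ∈ S with f s ≤ ρ / 2, (f s)⁻¹ ≤ 2 * K * ρ := by
      by_cases hmρ' : m ≤ ρ / 2
      · have := ih (S.filter (f · ≤ ρ / 2)) hmρ'
          (fun s hs => ⟨(hf s (mem_filter.1 hs).1).1, (mem_filter.1 hs).2⟩)
          (fun T hT => hcard T (hT.trans (filter_subset _ _)))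
          (by rw [pow_succ] at hn; linarith)
        linarith
      · rw [filter_false_of_mem fun s hs => by linarith [(hf s hs).1], sum_empty]
        positivity
    have hlarge : ∑ s ∈ S with ¬f s ≤ ρ / 2, (f s)⁻¹ ≤ 2 * K * ρ := by
      have hterm : ∀ s ∈ S.filter (¬f · ≤ ρ / 2), (f s)⁻¹ ≤ 2 / ρ := by
        intro s hs
        rw [inv_le_comm₀ (by linarith [(mem_filter.1 hs).2]) (by positivity), inv_div]
        linarith [(mem_filter.1 hs).2]
      have hT := hcard (S.filter (¬f · ≤ ρ / 2)) (filter_subset _ S) ρ hmρ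
        fun s hs => (hf s (mem_filter.1 hs).1).2
      calc ∑ s ∈ S with ¬f s ≤ ρ / 2, (f s)⁻¹ ≤ #(S.filter (¬f · ≤ ρ / 2)) * (2 / ρ) := by
            simpa using sum_le_card_nsmul _ _ _ hterm
        _ ≤ K * ρ ^ 2 * (2 / ρ) := by gcongr
        _ = 2 * K * ρ := by field_simp
    linarith

lemma card_le_sq_of_norm_latticePt_le {w : ℍ} (hw : 1 / 10 ≤ w.im) {t : ℝ} (ht : 1 / 10 ≤ t)
    {s : Finset (ℤ × ℤ)} (hs : ∀ p ∈ s, ‖latticePt w p‖ ≤ t) : (#s : ℝ) ≤ 660 * t ^ 2 := by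
  have hdiv : t / w.im ≤ 10 * t := by
    rw [div_le_iff₀ (by linarith)]
    nlinarith
  calc (#s : ℝ) ≤ (2 * (t / w.im) + 1) * (2 * t + 2) :=
        card_le_of_norm_latticePt_le (by linarith) hs
    _ ≤ (30 * t) * (22 * t) := by
        apply mul_le_mul <;> first | positivity | linarith
    _ = 660 * t ^ 2 := by ring

lemma finite_setOf_ptPair_smul_lt_and_ncard_le {z w : ℍ} (hz : 1 / 10 ≤ z.im)
    (hw : w.im = z.im) {X : ℝ} (hX : 0 < X) :
    {γ : SL(2, ℤ) | ptPair z (γ • w) < X}.Finite ∧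
      ({γ : SL(2, ℤ) | ptPair z (γ • w) < X}.ncard : ℝ) ≤
        42240 * (√(X * (X + 1)) * z.im + X + 1) := by
  set E := {γ : SL(2, ℤ) | ptPair z (γ • w) < X}
  set ρ := √X + √(X + 1)
  set r := 2 * √X * z.im
  have hw' : 1 / 10 ≤ w.im := hw ▸ hz
  have hsqrt_one : 1 ≤ √(X + 1) := Real.one_le_sqrt.2 (by linarith)
  have hρ : 1 / 10 ≤ ρ := by linarith [Real.sqrt_nonneg X]
  have hr : 0 ≤ r := by positivity
  set R := (finite_setOf_norm_latticePt_le w ρ).toFinset.filter (· ≠ 0)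
  have hR : ∀ p ∈ R, 1 / 10 ≤ ‖latticePt w p‖ ∧ ‖latticePt w p‖ ≤ ρ := by
    intro p hp
    rw [mem_filter, Set.Finite.mem_toFinset] at hp
    exact ⟨(le_min (by norm_num) hw').trans (min_one_im_le_norm_latticePt w hp.2), hp.1⟩
  have hcover : E ⊆ ⋃ p ∈ R, fiberInDisc w p (z * latticePt w p) r := by
    intro γ hγ
    refine Set.mem_iUnion₂.2 ⟨botRow γ, mem_filter.2 ⟨?_, botRow_ne_zero γ⟩,
      rfl, (ptPair_smul_lt_iff hw hX.le γ).1 hγ⟩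
    exact (Set.Finite.mem_toFinset _).2 (norm_latticePt_botRow_lt hw hX.le hγ).le
  have hfib p := finite_fiberInDisc_and_ncard_le w p (z * latticePt w p) hr
  have hfin : (⋃ p ∈ R, fiberInDisc w p (z * latticePt w p) r).Finite :=
    R.finite_toSet.biUnion fun p _ => (hfib p).1
  refine ⟨hfin.subset hcover, ?_⟩
  have hsum : ∑ p ∈ R, ‖latticePt w p‖⁻¹ ≤ 4 * 660 * ρ :=
    sum_inv_le_of_card_le_sq R _ (by norm_num) (by norm_num) hρ hR
      fun T _ _ ht hT => card_le_sq_of_norm_latticePt_le hw' ht hT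
  have hRcard : (#R : ℝ) ≤ 660 * ρ ^ 2 :=
    card_le_sq_of_norm_latticePt_le hw' hρ fun p hp => (hR p hp).2
  have hXρ : √X * ρ ≤ 2 * √(X * (X + 1)) := by
    rw [Real.sqrt_mul hX.le]
    nlinarith [Real.mul_self_sqrt hX.le, Real.sqrt_le_sqrt (by linarith : X ≤ X + 1),
      Real.sqrt_nonneg X]
  have hρsq : ρ ^ 2 ≤ 4 * (X + 1) := by
    nlinarith [Real.sq_sqrt hX.le, Real.sq_sqrt (by linarith : 0 ≤ X + 1),
      Real.sqrt_le_sqrt (by linarith : X ≤ X + 1), Real.sqrt_nonneg X]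
  calc (E.ncard : ℝ) ≤ ∑ p ∈ R, ((fiberInDisc w p (z * latticePt w p) r).ncard : ℝ) := by
        exact_mod_cast (Set.ncard_le_ncard hcover hfin).trans (R.set_ncard_biUnion_le _)
    _ ≤ ∑ p ∈ R, (4 * r / ‖latticePt w p‖ + 1) := sum_le_sum fun p _ => (hfib p).2
    _ = 4 * r * ∑ p ∈ R, ‖latticePt w p‖⁻¹ + #R := by
        simp [sum_add_distrib, mul_sum, div_eq_mul_inv]
    _ ≤ 4 * r * (4 * 660 * ρ) + 660 * ρ ^ 2 := by gcongr
    _ ≤ 42240 * (√(X * (X + 1)) * z.im + X + 1) := by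
        have := z.im_pos
        nlinarith

lemma im_reflUHP (z : ℍ) : (reflUHP z).im = z.im := by
  change (-(starRingEnd ℂ) (z : ℂ)).im = (z : ℂ).im
  simp

end HyperbolicLatticeCount

/-- counting elements of `SL₂(ℤ)` moving a point a bounded hyperbolic distance. -/
theorem stmt_5 :
    ∃ C > (0:ℝ), ∀ z : UpperHalfPlane, 1/10 ≤ z.im → ∀ X : ℝ, 0 < X →
      ({γ : SL(2, ℤ) | ptPair z (γ • z) < X}.Finite ∧
        (({γ : SL(2, ℤ) | ptPair z (γ • z) < X}).ncard : ℝ)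
          ≤ C * (Real.sqrt (X*(X+1)) * z.im + X + 1)) ∧
      ({γ : SL(2, ℤ) | ptPair z (γ • reflUHP z) < X}.Finite ∧
        (({γ : SL(2, ℤ) | ptPair z (γ • reflUHP z) < X}).ncard : ℝ)
          ≤ C * (Real.sqrt (X*(X+1)) * z.im + X + 1)) :=
  ⟨42240, by norm_num, fun z hz _ hX =>
    ⟨HyperbolicLatticeCount.finite_setOf_ptPair_smul_lt_and_ncard_le hz rfl hX,
      HyperbolicLatticeCount.finite_setOf_ptPair_smul_lt_and_ncard_le hz
        (HyperbolicLatticeCount.im_reflUHP z) hX⟩⟩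
end

section
/- Let T = (α β; β δ) be a 2×2 real symmetric positive definite matrix with D = det T, and let z_T = (−β + i√D)/α ∈ ℍ be the associated point in the upper half-plane. Then for every γ = (a b; c d) ∈ SL₂(ℝ), acting on ℍ by Möbius transformations, one has u(z_T, γ·z_T) = [ (cβ² − cD − (d−a)αβ − bα²)² + ((d−a)α − 2cβ)²·D ] / (4·α²·D). -/
/-! Writing `w = γ z`, one has `z - w = Q(z) / (cz + d)` with `Q(z) = c z² + (d - a) z - b`, while
`Im w = Im z / |cz + d|²`. The factors `|cz + d|²` cancel in the point-pair invariant, leaving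
`u(z, γ z) = |Q(z)|² / (4 (Im z)²)`, which for `z = (-β + i√D)/α` is expanded by direct computation. -/

namespace Complex

theorem im_moebius (a b c d : ℝ) (z : ℂ) :
    ((a * z + b) / (c * z + d)).im = (a * d - b * c) * z.im / normSq (c * z + d) := by
  simp only [div_im, add_re, add_im, mul_re, mul_im, ofReal_re, ofReal_im]
  ring

theorem mul_add_ne_zero_of_im_ne_zero {a b c d : ℝ} (hdet : a * d - b * c = 1) {z : ℂ}
    (hz : z.im ≠ 0) : (c : ℂ) * z + d ≠ 0 := by
  intro h
  have hc : c = 0 := by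
    simpa [hz] using congrArg im h
  have hd : d = 0 := by
    simpa [hc] using congrArg re h
  simp [hc, hd] at hdet

theorem sub_moebius {a b c d : ℝ} {z : ℂ} (h : (c : ℂ) * z + d ≠ 0) :
    z - (a * z + b) / (c * z + d) = (c * z ^ 2 + (d - a) * z - b) / (c * z + d) := by
  rw [eq_div_iff h, sub_mul, div_mul_cancel₀ _ h]
  ring

theorem pointPair_moebius {a b c d : ℝ} (hdet : a * d - b * c = 1) {z : ℂ} (hz : z.im ≠ 0) :
    ‖z - (a * z + b) / (c * z + d)‖ ^ 2 / (4 * z.im * ((a * z + b) / (c * z + d)).im)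
      = normSq (c * z ^ 2 + (d - a) * z - b) / (4 * z.im ^ 2) := by
  have hden := mul_add_ne_zero_of_im_ne_zero hdet hz
  have hN : normSq ((c : ℂ) * z + d) ≠ 0 := normSq_eq_zero.not.mpr hden
  rw [sub_moebius hden, im_moebius, hdet, norm_div, div_pow, Complex.sq_norm, Complex.sq_norm]
  field_simp

theorem normSq_quadratic_at_point (a b c d α β s : ℝ) (hα : α ≠ 0) :
    normSq (c * ((((-β : ℝ) : ℂ) + s * I) / α) ^ 2 + (d - a) * ((((-β : ℝ) : ℂ) + s * I) / α) - b)
      = ((c * β ^ 2 - c * s ^ 2 - (d - a) * α * β - b * α ^ 2) ^ 2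
          + ((d - a) * α - 2 * c * β) ^ 2 * s ^ 2) / α ^ 4 := by
  simp only [normSq_apply, add_re, add_im, sub_re, sub_im, mul_re, mul_im, div_ofReal_re,
    div_ofReal_im, ofReal_re, ofReal_im, I_re, I_im, pow_two]
  field_simp
  ring

end Complex

open Complex in
theorem stmt_12_general (α β : ℝ) (hα : 0 < α) (D : ℝ) (hDpos : 0 < D)
    (a b c d : ℝ) (hdet : a*d - b*c = 1) :
    let z : ℂ := ((-β : ℝ) + (Real.sqrt D : ℝ) * Complex.I) / (α : ℂ)
    let w : ℂ := ((a : ℂ) * z + (b : ℂ)) / ((c : ℂ) * z + (d : ℂ))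
    ‖z - w‖^2 / (4 * z.im * w.im)
      = ((c*β^2 - c*D - (d-a)*α*β - b*α^2)^2 + ((d-a)*α - 2*c*β)^2 * D) / (4*α^2*D) := by
  intro z w
  have hs : Real.sqrt D ^ 2 = D := Real.sq_sqrt hDpos.le
  have hz_im : z.im = Real.sqrt D / α := by
    simp [z, div_ofReal_im]
  have hz_im_ne : z.im ≠ 0 := by
    rw [hz_im]
    exact div_ne_zero (Real.sqrt_pos.mpr hDpos).ne' hα.ne'
  rw [pointPair_moebius hdet hz_im_ne, normSq_quadratic_at_point a b c d α β _ hα.ne', hs, hz_im,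
    div_pow, hs]
  field_simp

/-- explicit formula for the point-pair invariant `u(z_T, γ z_T)`. -/
theorem stmt_12 (α β δ : ℝ) (hα : 0 < α) (D : ℝ) (hD : D = α*δ - β^2) (hDpos : 0 < D)
    (a b c d : ℝ) (hdet : a*d - b*c = 1) :
    let z : ℂ := ((-β : ℝ) + (Real.sqrt D : ℝ) * Complex.I) / (α : ℂ)
    let w : ℂ := ((a : ℂ) * z + (b : ℂ)) / ((c : ℂ) * z + (d : ℂ))
    ‖z - w‖^2 / (4 * z.im * w.im)
      = ((c*β^2 - c*D - (d-a)*α*β - b*α^2)^2 + ((d-a)*α - 2*c*β)^2 * D) / (4*α^2*D) :=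
  stmt_12_general α β hα D hDpos a b c d hdet
end

section
/- Let T = (α β; β δ) ∈ P(ℤ) with D = det T > 0, and let z_T = (−β + i√D)/α ∈ ℍ be the associated point in the upper half-plane. Then for every γ ∈ SL₂(ℤ) with γ·z_T ≠ z_T (Möbius action), one has u(z_T, γ·z_T) ≥ min( 1/(4α²), 1/(4D) ). -/
/-!
The point `z = z_T` is a root of `α z² + B z + δ`. For `γ = (a b; c d)` one has
`z - γz = (c z² + (d - a) z - b) / (c z + d)` and `Im γz = Im z / |c z + d|²`, so
`u(z, γz) = |c z² + (d - a) z - b|² / (4 (Im z)²)`. Multiplying the numerator by `α` and using the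
quadratic equation turns it into `P z - R` with integers `P, R`, while `α² (Im z)² = D`; hence
`u(z, γz) = |P z - R|² / (4 D)`. If `P ≠ 0` this is at least `(Im z)² / (4 D) = 1 / (4 α²)`; if
`P = 0` then `R ≠ 0` (otherwise `γ` fixes `z`) and it equals `R² / (4 D) ≥ 1 / (4 D)`.
-/

open Complex

noncomputable def pointPairInvariant (z w : ℂ) : ℝ := ‖z - w‖ ^ 2 / (4 * z.im * w.im)

section Mobius

variable {a b c d : ℝ} {z : ℂ}

lemma mobius_denom_ne_zero (hdet : a * d - b * c = 1) (hz : z.im ≠ 0) :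
    (c * z + d : ℂ) ≠ 0 := by
  intro h
  have hc : c = 0 := by
    have him : c * z.im = 0 := by simpa using congrArg Complex.im h
    exact (mul_eq_zero.mp him).resolve_right hz
  have hd : d = 0 := by simpa [hc] using congrArg Complex.re h
  simp [hc, hd] at hdet

lemma im_mobius (hdet : a * d - b * c = 1) (z : ℂ) :
    ((a * z + b) / (c * z + d)).im = z.im / normSq (c * z + d) := by
  rw [div_im, ← sub_div]
  congr 1
  simp only [add_re, add_im, mul_re, mul_im, ofReal_re, ofReal_im]
  linear_combination z.im * hdet

lemma self_sub_mobius (hden : (c * z + d : ℂ) ≠ 0) :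
    z - (a * z + b) / (c * z + d) = (c * z ^ 2 + (d - a) * z - b) / (c * z + d) := by
  rw [eq_div_iff hden, sub_mul, div_mul_cancel₀ _ hden]
  ring

lemma pointPairInvariant_mobius (hdet : a * d - b * c = 1) (hz : z.im ≠ 0) :
    pointPairInvariant z ((a * z + b) / (c * z + d)) =
      normSq (c * z ^ 2 + (d - a) * z - b) / (4 * z.im ^ 2) := by
  have hden := mobius_denom_ne_zero hdet hz
  have hN : normSq (c * z + d) ≠ 0 := (normSq_pos.mpr hden).ne'
  rw [pointPairInvariant, self_sub_mobius hden, im_mobius hdet, Complex.sq_norm, normSq_div]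
  field_simp

end Mobius

section QuadraticPoint

variable {a b c d α β δ : ℝ} {z : ℂ}

lemma mobius_numerator_of_root (hroot : α * z ^ 2 + β * z + δ = 0) :
    (α * (d - a) - c * β) * z - (c * δ + α * b) = α * (c * z ^ 2 + (d - a) * z - b) := by
  linear_combination (-c) * hroot

lemma mobius_eq_self_of_root (hα : α ≠ 0) (hroot : α * z ^ 2 + β * z + δ = 0)
    (hdet : a * d - b * c = 1) (hz : z.im ≠ 0)
    (hP : α * (d - a) - c * β = 0) (hR : c * δ + α * b = 0) :
    (a * z + b) / (c * z + d) = z := by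
  have hnum := mobius_numerator_of_root (a := a) (b := b) (c := c) (d := d) hroot
  have hQ : (c * z ^ 2 + (d - a) * z - b : ℂ) = 0 := by
    simpa [← ofReal_mul, ← ofReal_sub, ← ofReal_add, hP, hR, hα] using hnum.symm
  rw [eq_comm, ← sub_eq_zero, self_sub_mobius (mobius_denom_ne_zero hdet hz), hQ, zero_div]

lemma pointPairInvariant_mobius_of_root (hα : α ≠ 0) (hroot : α * z ^ 2 + β * z + δ = 0)
    (hdet : a * d - b * c = 1) (hz : z.im ≠ 0) :
    pointPairInvariant z ((a * z + b) / (c * z + d)) =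
      normSq ((α * (d - a) - c * β) * z - (c * δ + α * b)) / (4 * (α * z.im) ^ 2) := by
  rw [pointPairInvariant_mobius hdet hz, mobius_numerator_of_root hroot, normSq_mul, normSq_ofReal]
  field_simp

end QuadraticPoint

lemma min_im_sq_one_le_normSq {P R : ℤ} (hPR : P ≠ 0 ∨ R ≠ 0) (z : ℂ) :
    min (z.im ^ 2) 1 ≤ normSq (P * z - R) := by
  have hnormSq : normSq (P * z - R) = (P * z.re - R) ^ 2 + P ^ 2 * z.im ^ 2 := by
    simp only [normSq_apply, sub_re, sub_im, mul_re, mul_im, intCast_re, intCast_im]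
    ring
  rw [hnormSq]
  rcases eq_or_ne P 0 with rfl | hP
  · have hR : (1 : ℝ) ≤ (R : ℝ) ^ 2 := by
      rw [one_le_sq_iff_one_le_abs]
      exact_mod_cast Int.one_le_abs (hPR.resolve_left (not_not.mpr rfl))
    simpa using min_le_of_right_le hR
  · have hP1 : (1 : ℝ) ≤ (P : ℝ) ^ 2 := by
      rw [one_le_sq_iff_one_le_abs]
      exact_mod_cast Int.one_le_abs hP
    refine min_le_of_left_le ?_
    nlinarith [sq_nonneg (P * z.re - R : ℝ), sq_nonneg z.im]

-- `B` is twice the off-diagonal entry of `T`.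
noncomputable def heegnerPoint (α B D : ℝ) : ℂ := (-(B / 2) + √D * I) / α

section HeegnerPoint

variable {α B δ D : ℝ}

lemma heegnerPoint_im : (heegnerPoint α B D).im = √D / α := by
  simp [heegnerPoint, div_ofReal_im]

lemma heegnerPoint_isRoot (hα : α ≠ 0) (hD : D = α * δ - (B / 2) ^ 2) (hD0 : 0 ≤ D) :
    α * heegnerPoint α B D ^ 2 + B * heegnerPoint α B D + δ = 0 := by
  have hz : α * heegnerPoint α B D = -(B / 2) + √D * I := by
    rw [heegnerPoint, mul_div_cancel₀ _ (ofReal_ne_zero.mpr hα)]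
  have hsqrt : ((√D : ℝ) : ℂ) ^ 2 = α * δ - (B / 2) ^ 2 := by
    rw [← ofReal_pow, Real.sq_sqrt hD0, hD]; push_cast; ring
  refine (mul_eq_zero.mp ?_).resolve_left (ofReal_ne_zero.mpr hα)
  linear_combination (α * heegnerPoint α B D + B / 2 + √D * I) * hz + √D ^ 2 * I_sq - hsqrt

end HeegnerPoint

/-- lower bound `u(z_T, γ z_T) ≥ min(1/(4α²), 1/(4D))` for `γ ∈ SL₂(ℤ)`
not fixing the Heegner point `z_T` of `T = (α, B/2; B/2, δ) ∈ P(ℤ)`. -/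
theorem stmt_13 (α δ B : ℤ) (hα : 0 < α) (D : ℝ)
    (hD : D = (α:ℝ)*(δ:ℝ) - ((B:ℝ)/2)^2) (hDpos : 0 < D)
    (a b c d : ℤ) (hdet : a*d - b*c = 1) :
    let z : ℂ := (-((B:ℂ)/2) + (Real.sqrt D : ℝ) * Complex.I) / (α : ℂ)
    let w : ℂ := ((a : ℂ) * z + (b : ℂ)) / ((c : ℂ) * z + (d : ℂ))
    w ≠ z →
    min (1/(4*(α:ℝ)^2)) (1/(4*D)) ≤ ‖z - w‖^2 / (4 * z.im * w.im) := by
  intro z w hne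
  have hαR : (α : ℝ) ≠ 0 := by exact_mod_cast hα.ne'
  have hdetR : (a : ℝ) * d - b * c = 1 := by exact_mod_cast hdet
  have hz : z = heegnerPoint α B D := by simp [z, heegnerPoint]
  have hroot := heegnerPoint_isRoot hαR hD hDpos.le
  have hαim : ((α : ℝ) * z.im) ^ 2 = D := by
    rw [hz, heegnerPoint_im, mul_div_cancel₀ _ hαR, Real.sq_sqrt hDpos.le]
  have hzim : z.im ≠ 0 := by
    rw [hz, heegnerPoint_im]
    exact div_ne_zero (Real.sqrt_pos.mpr hDpos).ne' hαR
  rw [← hz] at hroot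
  have hPR : α * (d - a) - c * B ≠ 0 ∨ c * δ + α * b ≠ 0 := by
    by_contra! h
    refine hne ?_
    have := mobius_eq_self_of_root (a := a) (b := b) (c := c) (d := d) hαR hroot hdetR hzim
      (by exact_mod_cast h.1) (by exact_mod_cast h.2)
    simpa using this
  have hu := pointPairInvariant_mobius_of_root (a := a) (b := b) (c := c) (d := d)
    hαR hroot hdetR hzim
  push_cast at hu
  show _ ≤ pointPairInvariant z w
  calc min (1 / (4 * (α : ℝ) ^ 2)) (1 / (4 * D)) = min (z.im ^ 2) 1 / (4 * D) := by
        rw [← min_div_div_right (by positivity), ← hαim]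
        field_simp
    _ ≤ normSq ((α * (d - a) - c * B : ℤ) * z - (c * δ + α * b : ℤ)) / (4 * D) := by
        gcongr
        exact min_im_sq_one_le_normSq hPR z
    _ = pointPairInvariant z w := by rw [hu, hαim]; push_cast; rfl
end

section
/- Let Q = (x y; y z) be a 2×2 real symmetric matrix with x > 0, det Q > 0 and 2|y| ≤ x ≤ z, and let M = (a b; c d) ∈ GL₂(ℤ) satisfy MᵗQM = Q. Then |a·c| ≤ 1, and if |d| ≥ 2 then b = 0. -/
open Matrix

/-- constraints on automorphisms of a reduced positive definite binary
quadratic form: `|ac| ≤ 1`, and `|d| ≥ 2` forces `b = 0`. -/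
theorem stmt_15 (x y z : ℝ) (hx : 0 < x) (hdet : 0 < x*z - y^2)
    (hy : 2*|y| ≤ x) (hxz : x ≤ z)
    (a b c d : ℤ) (hM : a*d - b*c = 1 ∨ a*d - b*c = -1)
    (hQ : (!![(a:ℝ), (b:ℝ); (c:ℝ), (d:ℝ)])ᵀ * !![x, y; y, z] * !![(a:ℝ), (b:ℝ); (c:ℝ), (d:ℝ)]
            = !![x, y; y, z]) :
    |a*c| ≤ 1 ∧ (2 ≤ |d| → b = 0) := by
  have h11 := congrFun (congrFun hQ 0) 0
  have h22 := congrFun (congrFun hQ 1) 1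
  simp [Matrix.mul_apply, Fin.sum_univ_two, Matrix.transpose_apply, Matrix.cons_val_zero,
      Matrix.cons_val_one, Matrix.head_cons, Matrix.vecHead, Matrix.vecTail] at h11 h22
  constructor
  · -- x = Q(a,c) ≥ x|ac|
    have hac : ((a:ℝ))*c*y ≥ -(|(a:ℝ)*c| * |y|) := by
      rw [← abs_mul]; exact neg_abs_le _
    have habs : |(a:ℝ)*c| = |(a:ℝ)| * |(c:ℝ)| := abs_mul _ _
    have h1 : (|(a:ℝ)| - |(c:ℝ)|)^2 ≥ 0 := sq_nonneg _
    have ha2 : |(a:ℝ)|^2 = (a:ℝ)^2 := sq_abs _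
    have hc2 : |(c:ℝ)|^2 = (c:ℝ)^2 := sq_abs _
    have key : (|(a:ℝ)*c|) ≤ 1 := by
      nlinarith [abs_nonneg ((a:ℝ)*c), abs_nonneg y, abs_nonneg (a:ℝ), abs_nonneg (c:ℝ)]
    have : ((|a*c| : ℤ) : ℝ) ≤ 1 := by push_cast [Int.cast_abs]; exact key
    exact_mod_cast this
  · intro hd
    by_contra hb
    have hb1 : (1:ℝ) ≤ |(b:ℝ)| := by
      have : 1 ≤ |b| := Int.one_le_abs (by exact_mod_cast hb)
      exact_mod_cast (by push_cast [← Int.cast_abs]; exact_mod_cast this : (1:ℝ) ≤ ((|b|:ℤ):ℝ))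
    have hd2 : (2:ℝ) ≤ |(d:ℝ)| := by
      exact_mod_cast (by push_cast [← Int.cast_abs]; exact_mod_cast hd : (2:ℝ) ≤ ((|d|:ℤ):ℝ))
    have hbd : ((b:ℝ))*d*y ≥ -(|(b:ℝ)| * |(d:ℝ)| * |y|) := by
      rw [← abs_mul, ← abs_mul]; exact neg_abs_le _
    have hb2 : |(b:ℝ)|^2 = (b:ℝ)^2 := sq_abs _
    have hdd2 : |(d:ℝ)|^2 = (d:ℝ)^2 := sq_abs _
    have hz : 0 < z := lt_of_lt_of_le hx hxz
    have hbdnn : (0:ℝ) ≤ |(b:ℝ)| * |(d:ℝ)| := mul_nonneg (abs_nonneg _) (abs_nonneg _)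
    have s1 : z*((d:ℝ)^2-1) ≤ x*(|(b:ℝ)| * |(d:ℝ)| - |(b:ℝ)|^2) := by
      nlinarith [mul_le_mul_of_nonneg_left hy hbdnn]
    have s2 : x*(|(b:ℝ)| * |(d:ℝ)| - |(b:ℝ)|^2) ≤ x*((d:ℝ)^2/4) := by
      nlinarith [sq_nonneg (|(b:ℝ)| - |(d:ℝ)|/2)]
    have s3 : x*((d:ℝ)^2/4) ≤ z*((d:ℝ)^2/4) := by
      nlinarith [sq_nonneg (d:ℝ)]
    have hd4 : (4:ℝ) ≤ (d:ℝ)^2 := by nlinarith [abs_nonneg (d:ℝ)]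
    nlinarith [mul_le_mul_of_nonneg_left hd4 hz.le]
end

section
/- Let Q = (x y; y z) be a 2×2 real symmetric matrix with x > 0, z ≥ x, 2|y| ≤ x, and suppose y ≠ 0, x ≠ z and x ≠ 2|y|. Then {M ∈ GL₂(ℤ) : MᵗQM = Q} = {I, −I}, where I is the identity matrix. -/
open Matrix

private lemma aux_int (p q : ℤ) (hp : 0 ≤ p) (hq : 1 ≤ q) : 1 ≤ p^2 - p*q + q^2 := by
  rcases hp.eq_or_lt with h | h
  · nlinarith
  · nlinarith [sq_nonneg (p - q)]

/-- the generic reduced form has only the trivial automorphisms `±I`. -/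
theorem stmt_16 (x y z : ℝ) (hx : 0 < x) (hzx : x ≤ z) (hy : 2*|y| ≤ x)
    (hy0 : y ≠ 0) (hxz : x ≠ z) (hx2y : x ≠ 2*|y|) :
    {M : Matrix (Fin 2) (Fin 2) ℤ | (M.det = 1 ∨ M.det = -1) ∧
        (M.map (Int.cast : ℤ → ℝ))ᵀ * !![x, y; y, z] * M.map (Int.cast : ℤ → ℝ)
          = !![x, y; y, z]}
      = {(1 : Matrix (Fin 2) (Fin 2) ℤ), (-1 : Matrix (Fin 2) (Fin 2) ℤ)} := by
  have hy' : 2*|y| < x := lt_of_le_of_ne hy (Ne.symm hx2y)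
  have hz' : x < z := lt_of_le_of_ne hzx hxz
  ext M
  simp only [Set.mem_setOf_eq, Set.mem_insert_iff, Set.mem_singleton_iff]
  constructor
  · rintro ⟨hdet, hQ⟩
    have h00 := congrFun (congrFun hQ 0) 0
    have h01 := congrFun (congrFun hQ 0) 1
    simp [Matrix.mul_apply, Fin.sum_univ_two] at h00 h01
    rw [Matrix.det_fin_two] at hdet
    set a := M 0 0 with ha
    set b := M 0 1 with hb
    set c := M 1 0 with hc
    set d := M 1 1 with hd
    -- step 1 : c = 0
    have hc0 : c = 0 := by
      by_contra hc0
      have hC : (1:ℝ) ≤ |(c:ℝ)| := by exact_mod_cast Int.one_le_abs hc0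
      have haux : (1:ℝ) ≤ |(a:ℝ)| ^ 2 - |(a:ℝ)| * |(c:ℝ)| + |(c:ℝ)| ^ 2 := by
        have := aux_int |a| |c| (abs_nonneg a) (by exact_mod_cast Int.one_le_abs hc0)
        exact_mod_cast this
      have hcross : -( |y| * (|(a:ℝ)| * |(c:ℝ)|)) ≤ y * ((a:ℝ) * (c:ℝ)) := by
        have := neg_abs_le (y * ((a:ℝ) * (c:ℝ)))
        rwa [abs_mul, abs_mul] at this
      have hC2 : (1:ℝ) ≤ |(c:ℝ)| ^ 2 := by nlinarith
      have e1 : x * 1 ≤ x * (|(a:ℝ)| ^ 2 - |(a:ℝ)| * |(c:ℝ)| + |(c:ℝ)| ^ 2) :=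
        mul_le_mul_of_nonneg_left haux hx.le
      have e2 : 0 ≤ (x - 2*|y|) * (|(a:ℝ)| * |(c:ℝ)|) :=
        mul_nonneg (by linarith) (mul_nonneg (abs_nonneg _) (abs_nonneg _))
      have e3 : (z - x) * 1 ≤ (z - x) * (|(c:ℝ)| ^ 2) :=
        mul_le_mul_of_nonneg_left hC2 (by linarith)
      nlinarith [e1, e2, e3, hcross, sq_abs (a:ℝ), sq_abs (c:ℝ), h00]
    rw [hc0] at h00 h01 hdet
    push_cast at h00 h01
    -- step 2 : a = ±1
    have haSq : a^2 = 1 := by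
      have : ((a:ℝ))^2 = 1 := by
        have hxne : x ≠ 0 := ne_of_gt hx
        field_simp at h00
        nlinarith [h00]
      exact_mod_cast this
    have ha1 : a = 1 ∨ a = -1 := by
      have hfac : (a - 1) * (a + 1) = 0 := by ring_nf; linarith [haSq]
      rcases mul_eq_zero.mp hfac with h | h
      · left; omega
      · right; omega
    have haabs : |(a:ℝ)| = 1 := by
      rcases ha1 with h | h <;> rw [h] <;> norm_num
    simp only [mul_zero, sub_zero] at hdet
    -- analyse the determinant cases
    rcases hdet with had | had
    · -- a*d = 1 : then b = 0
      have hADr : ((a:ℝ)) * ((d:ℝ)) = 1 := by exact_mod_cast had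
      have hb0 : b = 0 := by
        have hxab : x * ((a:ℝ) * (b:ℝ)) = 0 := by linear_combination h01 - y * hADr
        have hab : (a:ℝ) * (b:ℝ) = 0 := by
          rcases mul_eq_zero.mp hxab with h | h
          · exact absurd h (ne_of_gt hx)
          · exact h
        have : a * b = 0 := by exact_mod_cast hab
        rcases mul_eq_zero.mp this with h | h
        · exfalso; rcases ha1 with h' | h' <;> omega
        · exact h
      rcases ha1 with h | h
      · left
        have hd1 : d = 1 := by rw [h] at had; omega
        rw [Matrix.eta_fin_two M, ← ha, ← hb, ← hc, ← hd, h, hb0, hc0, hd1]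
        ext i j; fin_cases i <;> fin_cases j <;> simp
      · right
        have hd1 : d = -1 := by rw [h] at had; omega
        rw [Matrix.eta_fin_two M, ← ha, ← hb, ← hc, ← hd, h, hb0, hc0, hd1]
        ext i j; fin_cases i <;> fin_cases j <;> simp
    · -- a*d = -1 : impossible
      exfalso
      have hADr : ((a:ℝ)) * ((d:ℝ)) = -1 := by exact_mod_cast had
      have hxab : x * ((a:ℝ) * (b:ℝ)) = 2*y := by linear_combination h01 - y * hADr
      have hb0 : b = 0 := by
        by_contra hb0
        have hB : (1:ℝ) ≤ |(b:ℝ)| := by exact_mod_cast Int.one_le_abs hb0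
        have h1 : |x * ((a:ℝ) * (b:ℝ))| = 2*|y| := by
          rw [hxab, abs_mul]; norm_num
        rw [abs_mul, abs_mul, haabs, one_mul, abs_of_pos hx] at h1
        nlinarith
      rw [hb0] at hxab
      push_cast at hxab
      apply hy0
      linarith [hxab]
  · rintro (rfl | rfl)
    · refine ⟨Or.inl (by simp), ?_⟩
      ext i j
      fin_cases i <;> fin_cases j <;>
        simp [Matrix.mul_apply, Fin.sum_univ_two, Matrix.one_apply]
    · refine ⟨Or.inl (by norm_num [Matrix.det_fin_two]), ?_⟩
      ext i j
      fin_cases i <;> fin_cases j <;>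
        simp [Matrix.mul_apply, Fin.sum_univ_two, Matrix.one_apply]
end

section
/- Let Q = (x y; y x) be a 2×2 real symmetric matrix with 0 < 2|y| < x. Then {M ∈ GL₂(ℤ) : MᵗQM = Q} = {I, −I, S, −S}, where I is the identity matrix and S = (0 1; 1 0). -/
open Matrix

lemma key17 (x y : ℝ) (hyx : 2*|y| < x) (a c : ℤ)
    (h : ((a:ℝ) * x + c * y) * a + ((a:ℝ) * y + c * x) * c = x) :
    (a = 0 ∧ (c = 1 ∨ c = -1)) ∨ (c = 0 ∧ (a = 1 ∨ a = -1)) := by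
  have hx : 0 < x := lt_of_le_of_lt (by positivity) hyx
  have h3 : |(a:ℝ)*c| ≤ ((a:ℝ)^2+(c:ℝ)^2)/2 := by
    rw [abs_le]; constructor <;> nlinarith [sq_nonneg ((a:ℝ)+c), sq_nonneg ((a:ℝ)-c)]
  have h1 : 0 ≤ 2 * |y| * |(a:ℝ)*c| + 2*(y*((a:ℝ)*c)) := by
    have h4 := neg_abs_le (y*((a:ℝ)*c))
    have h5 : |y*((a:ℝ)*c)| = |y| * |(a:ℝ)*c| := abs_mul _ _
    linarith
  have habs : 0 ≤ |(a:ℝ)*c| := abs_nonneg _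
  have hle2 : (a:ℝ)^2 + (c:ℝ)^2 ≤ 2 := by nlinarith
  have hle2' : a^2 + c^2 ≤ 2 := by exact_mod_cast (by push_cast; linarith : ((a^2+c^2 : ℤ) : ℝ) ≤ 2)
  have ha1 : -1 ≤ a ∧ a ≤ 1 := by constructor <;> nlinarith [sq_nonneg a, sq_nonneg c]
  have hc1 : -1 ≤ c ∧ c ≤ 1 := by constructor <;> nlinarith [sq_nonneg a, sq_nonneg c]
  obtain ⟨ha, ha'⟩ := ha1; obtain ⟨hc, hc'⟩ := hc1
  interval_cases a <;> interval_cases c <;>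
    simp only [Int.cast_one, Int.cast_zero, Int.cast_neg] at h <;>
    first
      | omega
      | (exfalso; rcases abs_cases y with ⟨h6,h7⟩|⟨h6,h7⟩ <;> linarith)

/-- automorphisms of `Q = (x y; y x)` with `0 < 2|y| < x` are `±I, ±S`
where `S = (0 1; 1 0)`. -/
theorem stmt_17 (x y : ℝ) (hy : 0 < 2*|y|) (hyx : 2*|y| < x) :
    {M : Matrix (Fin 2) (Fin 2) ℤ | (M.det = 1 ∨ M.det = -1) ∧
        (M.map (Int.cast : ℤ → ℝ))ᵀ * !![x, y; y, x] * M.map (Int.cast : ℤ → ℝ)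
          = !![x, y; y, x]}
      = {(1 : Matrix (Fin 2) (Fin 2) ℤ), -1, !![0, 1; 1, 0], -!![0, 1; 1, 0]} := by
  have hy0 : y ≠ 0 := by
    intro h; rw [h] at hy; simp at hy
  ext M
  simp only [Set.mem_setOf_eq, Set.mem_insert_iff, Set.mem_singleton_iff]
  constructor
  · rintro ⟨hdet, hQ⟩
    rw [Matrix.det_fin_two] at hdet
    have e00 := congrFun (congrFun hQ 0) 0
    have e01 := congrFun (congrFun hQ 0) 1
    have e11 := congrFun (congrFun hQ 1) 1
    simp [Matrix.mul_apply, Fin.sum_univ_two, Matrix.map_apply] at e00 e01 e11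
    have h1 := key17 x y hyx (M 0 0) (M 1 0) e00
    have h2 := key17 x y hyx (M 0 1) (M 1 1) e11
    rcases h1 with ⟨ha, hc|hc⟩|⟨hc, ha|ha⟩ <;>
      rcases h2 with ⟨hb, hd|hd⟩|⟨hd, hb|hb⟩ <;>
      rw [ha, hb, hc, hd] at e01 hdet <;>
      push_cast at e01 <;>
      first
        | omega
        | (exfalso; rcases abs_cases y with ⟨h6,h7⟩|⟨h6,h7⟩ <;> linarith)
        | (rw [Matrix.eta_fin_two M, ha, hb, hc, hd]; decide)
  · rintro (rfl|rfl|rfl|rfl) <;>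
      refine ⟨by decide, ?_⟩ <;>
      (ext i j; fin_cases i <;> fin_cases j <;>
        simp [Matrix.mul_apply, Fin.sum_univ_two, Matrix.map_apply])
end

section
/- Let Q = (x y; y z) be a 2×2 real symmetric matrix with x > 0, det Q > 0 and 2|y| ≤ x ≤ z, and let A = {M ∈ GL₂(ℤ) : MᵗQM = Q} and A⁺ = A ∩ SL₂(ℤ). If y = 0, or x = z, or x = 2|y|, then the cardinality of A is exactly twice the cardinality of A⁺; otherwise A = A⁺ = {I, −I}, where I is the identity matrix. -/
open Matrix

private lemma mapMul (M N : Matrix (Fin 2) (Fin 2) ℤ) :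
    (M * N).map (Int.cast : ℤ → ℝ) = M.map Int.cast * N.map Int.cast :=
  Matrix.map_mul (f := Int.castRingHom ℝ)

private lemma card_aux (x y z : ℝ) (S : Matrix (Fin 2) (Fin 2) ℤ)
    (hSdet : S.det = -1) (hSS : S * S = 1)
    (hSQ : (S.map (Int.cast : ℤ → ℝ))ᵀ * !![x, y; y, z] * S.map (Int.cast : ℤ → ℝ)
      = !![x, y; y, z]) :
    ({M : Matrix (Fin 2) (Fin 2) ℤ | (M.det = 1 ∨ M.det = -1) ∧
        (M.map (Int.cast : ℤ → ℝ))ᵀ * !![x, y; y, z] * M.map (Int.cast : ℤ → ℝ)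
          = !![x, y; y, z]}).ncard
      = 2 * (({M : Matrix (Fin 2) (Fin 2) ℤ | (M.det = 1 ∨ M.det = -1) ∧
        (M.map (Int.cast : ℤ → ℝ))ᵀ * !![x, y; y, z] * M.map (Int.cast : ℤ → ℝ)
          = !![x, y; y,z]} ∩ {M : Matrix (Fin 2) (Fin 2) ℤ | M.det = 1}).ncard) := by
  set Q : Matrix (Fin 2) (Fin 2) ℝ := !![x, y; y, z] with hQdef
  set A : Set (Matrix (Fin 2) (Fin 2) ℤ) := {M | (M.det = 1 ∨ M.det = -1) ∧
      (M.map (Int.cast : ℤ → ℝ))ᵀ * Q * M.map (Int.cast : ℤ → ℝ) = Q} with hAdef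
  set Ap : Set (Matrix (Fin 2) (Fin 2) ℤ) := A ∩ {M | M.det = 1} with hApdef
  have hQmul : ∀ M ∈ A, ((M * S).map (Int.cast : ℤ → ℝ))ᵀ * Q
      * (M * S).map (Int.cast : ℤ → ℝ) = Q := by
    intro M hM
    rw [mapMul, Matrix.transpose_mul]
    calc (S.map (Int.cast : ℤ → ℝ))ᵀ * (M.map Int.cast)ᵀ * Q
          * (M.map Int.cast * S.map Int.cast)
        = (S.map (Int.cast : ℤ → ℝ))ᵀ * ((M.map Int.cast)ᵀ * Q * M.map Int.cast)
            * S.map Int.cast := by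
          simp only [mul_assoc]
      _ = (S.map (Int.cast : ℤ → ℝ))ᵀ * Q * S.map Int.cast := by rw [hM.2]
      _ = Q := hSQ
  have hmemS : ∀ M ∈ A, M * S ∈ A := by
    intro M hM
    refine ⟨?_, hQmul M hM⟩
    rw [Matrix.det_mul, hSdet]
    rcases hM.1 with h | h <;> rw [h] <;> simp
  have hinj : Function.Injective (fun M : Matrix (Fin 2) (Fin 2) ℤ => M * S) := by
    intro M N h
    have h2 := congrArg (· * S) h
    simpa [mul_assoc, hSS] using h2
  have hBeq : A \ Ap = (fun M => M * S) '' Ap := by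
    ext N
    constructor
    · rintro ⟨hNA, hNs⟩
      have hdN : N.det = -1 := by
        rcases hNA.1 with h | h
        · exact absurd ⟨hNA, h⟩ hNs
        · exact h
      refine ⟨N * S, ⟨hmemS N hNA, ?_⟩, ?_⟩
      · show (N * S).det = 1
        rw [Matrix.det_mul, hdN, hSdet]; ring
      · show N * S * S = N
        rw [mul_assoc, hSS, mul_one]
    · rintro ⟨M, ⟨hMA, hMd⟩, rfl⟩
      refine ⟨hmemS M hMA, ?_⟩
      intro hmem
      have : (M * S).det = 1 := hmem.2
      rw [Matrix.det_mul, hMd, hSdet] at this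
      norm_num at this
  have hApA : Ap ⊆ A := Set.inter_subset_left
  by_cases hfin : Ap.Finite
  · have hBfin : (A \ Ap).Finite := by rw [hBeq]; exact hfin.image _
    have hcardB : (A \ Ap).ncard = Ap.ncard := by
      rw [hBeq, Set.ncard_image_of_injective _ hinj]
    have hU : Ap ∪ (A \ Ap) = A := Set.union_diff_cancel hApA
    have : A.ncard = Ap.ncard + (A \ Ap).ncard := by
      conv_lhs => rw [← hU]
      exact Set.ncard_union_eq disjoint_sdiff_self_right hfin hBfin
    rw [this, hcardB]; ring
  · have hAinf : ¬ A.Finite := fun h => hfin (h.subset hApA)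
    rw [Set.Infinite.ncard hAinf, Set.Infinite.ncard hfin]

set_option maxHeartbeats 1000000 in
/-- the automorphism group of a reduced positive definite form has twice as
many elements in `GL₂(ℤ)` as in `SL₂(ℤ)` in the special cases `y = 0`, `x = z`, `x = 2|y|`,
and otherwise equals `{I, -I}`. -/
theorem stmt_19 (x y z : ℝ) (hx : 0 < x) (hdet : 0 < x*z - y^2)
    (hy : 2*|y| ≤ x) (hxz : x ≤ z) :
    let A := {M : Matrix (Fin 2) (Fin 2) ℤ | (M.det = 1 ∨ M.det = -1) ∧
        (M.map (Int.cast : ℤ → ℝ))ᵀ * !![x, y; y, z] * M.map (Int.cast : ℤ → ℝ)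
          = !![x, y; y, z]}
    let Aplus := A ∩ {M : Matrix (Fin 2) (Fin 2) ℤ | M.det = 1}
    ((y = 0 ∨ x = z ∨ x = 2*|y|) → A.ncard = 2 * Aplus.ncard) ∧
    (¬(y = 0 ∨ x = z ∨ x = 2*|y|) →
      A = Aplus ∧ A = {(1 : Matrix (Fin 2) (Fin 2) ℤ), -1}) := by
  intro A Aplus
  constructor
  · intro hcase
    show ({M : Matrix (Fin 2) (Fin 2) ℤ | (M.det = 1 ∨ M.det = -1) ∧
        (M.map (Int.cast : ℤ → ℝ))ᵀ * !![x, y; y, z] * M.map (Int.cast : ℤ → ℝ)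
          = !![x, y; y, z]}).ncard
      = 2 * (({M : Matrix (Fin 2) (Fin 2) ℤ | (M.det = 1 ∨ M.det = -1) ∧
        (M.map (Int.cast : ℤ → ℝ))ᵀ * !![x, y; y, z] * M.map (Int.cast : ℤ → ℝ)
          = !![x, y; y,z]} ∩ {M : Matrix (Fin 2) (Fin 2) ℤ | M.det = 1}).ncard)
    rcases hcase with h0 | hxez | habs
    · -- y = 0, use S = diag(1,-1)
      subst h0
      refine card_aux x 0 z !![1,0;0,-1] (by simp [Matrix.det_fin_two_of]) ?_ ?_
      · rw [Matrix.one_fin_two]; norm_num [Matrix.mul_fin_two]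
      · ext i j
        fin_cases i <;> fin_cases j <;>
          simp [Matrix.mul_apply, Fin.sum_univ_two, Matrix.map_apply]
    · -- x = z, use swap
      refine card_aux x y z !![0,1;1,0] (by simp [Matrix.det_fin_two_of]) ?_ ?_
      · rw [Matrix.one_fin_two]; norm_num [Matrix.mul_fin_two]
      · ext i j
        fin_cases i <;> fin_cases j <;>
          simp [Matrix.mul_apply, Fin.sum_univ_two, Matrix.map_apply] <;>
          linarith [hxez]
    · -- x = 2|y|
      rcases abs_cases y with ⟨hay, _⟩ | ⟨hay, _⟩
      · rw [hay] at habs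
        refine card_aux x y z !![1,1;0,-1] (by simp [Matrix.det_fin_two_of]) ?_ ?_
        · rw [Matrix.one_fin_two]; norm_num [Matrix.mul_fin_two]
        · ext i j
          fin_cases i <;> fin_cases j <;>
            simp [Matrix.mul_apply, Fin.sum_univ_two, Matrix.map_apply] <;>
            linarith [habs]
      · rw [hay] at habs
        refine card_aux x y z !![1,-1;0,-1] (by simp [Matrix.det_fin_two_of]) ?_ ?_
        · rw [Matrix.one_fin_two]; norm_num [Matrix.mul_fin_two]
        · ext i j
          fin_cases i <;> fin_cases j <;>
            simp [Matrix.mul_apply, Fin.sum_univ_two, Matrix.map_apply] <;>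
            linarith [habs]
  · intro hn
    push_neg at hn
    obtain ⟨hy0, hxz0, habs0⟩ := hn
    have hy' : 2*|y| < x := lt_of_le_of_ne hy (fun h => habs0 h.symm)
    have hxz' : x < z := lt_of_le_of_ne hxz hxz0
    have hone : (1 : Matrix (Fin 2) (Fin 2) ℤ) ∈ A := by
      constructor
      · left; exact Matrix.det_one
      · rw [Matrix.map_one _ Int.cast_zero Int.cast_one]
        simp
    have hmapneg : ((-1 : Matrix (Fin 2) (Fin 2) ℤ).map (Int.cast : ℤ → ℝ)) = -1 := by
      ext i j
      fin_cases i <;> fin_cases j <;> simp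
    have hnegone : (-1 : Matrix (Fin 2) (Fin 2) ℤ) ∈ A := by
      constructor
      · left
        rw [Matrix.det_neg]
        simp
      · rw [hmapneg]
        simp
    have hset : A = {(1 : Matrix (Fin 2) (Fin 2) ℤ), -1} := by
      apply Set.Subset.antisymm
      · intro M hM
        obtain ⟨hd, hQ⟩ := hM
        have h00 := congrFun (congrFun hQ 0) 0
        have h01 := congrFun (congrFun hQ 0) 1
        have h11 := congrFun (congrFun hQ 1) 1
        simp [Matrix.mul_apply, Fin.sum_univ_two] at h00 h01 h11
        set a := M 0 0 with hadef
        set b := M 0 1 with hbdef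
        set c := M 1 0 with hcdef
        set d := M 1 1 with hddef
        have hdetM : M.det = a*d - b*c := Matrix.det_fin_two M
        clear_value a b c d
        -- c = 0
        have hc0 : c = 0 := by
          by_contra hc
          have hc1 : (1:ℝ) ≤ |(c:ℝ)| := by
            rw [← Int.cast_abs]
            exact_mod_cast Int.one_le_abs hc
          have hc2 : (1:ℝ) ≤ (c:ℝ)^2 := by
            nlinarith [abs_nonneg ((c:ℝ)), sq_abs ((c:ℝ))]
          by_cases ha : a = 0
          · rw [ha] at h00
            push_cast at h00
            nlinarith [h00, hc2, hxz', hx]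
          · have ha1 : (1:ℝ) ≤ |(a:ℝ)| := by
              rw [← Int.cast_abs]
              exact_mod_cast Int.one_le_abs ha
            have ha2 : (1:ℝ) ≤ (a:ℝ)^2 := by
              nlinarith [abs_nonneg ((a:ℝ)), sq_abs ((a:ℝ))]
            have hlow : (a:ℝ)*(c:ℝ)*y ≥ -(|(a:ℝ)| * |(c:ℝ)| * |y|) := by
              have := neg_abs_le ((a:ℝ)*(c:ℝ)*y)
              rw [abs_mul, abs_mul] at this
              linarith
            have e1 : (a:ℝ)^2*x + 2*((a:ℝ)*(c:ℝ)*y) + (c:ℝ)^2*z = x := by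
              linear_combination h00
            rw [← sq_abs ((a:ℝ)), ← sq_abs ((c:ℝ))] at e1
            have huv : (1:ℝ) ≤ |(a:ℝ)| * |(c:ℝ)| := by nlinarith [ha1, hc1]
            have hpos : (0:ℝ) < |(a:ℝ)| * |(c:ℝ)| := lt_of_lt_of_le one_pos huv
            have p1 : |(a:ℝ)| * |(c:ℝ)| * (2*|y|) < |(a:ℝ)| * |(c:ℝ)| * x :=
              mul_lt_mul_of_pos_left hy' hpos
            have p2 : |(c:ℝ)|^2 * x ≤ |(c:ℝ)|^2 * z :=
              mul_le_mul_of_nonneg_left hxz (sq_nonneg _)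
            have p3 : (0:ℝ) ≤ |(a:ℝ)|^2*x + |(c:ℝ)|^2*x - |(a:ℝ)| * |(c:ℝ)| * x - x := by
              nlinarith [mul_nonneg (sq_nonneg (|(a:ℝ)| - |(c:ℝ)|)) (le_of_lt hx),
                mul_nonneg (sub_nonneg.mpr huv) (le_of_lt hx)]
            linarith [e1, hlow, p1, p2, p3, abs_nonneg y]
        -- a² = 1
        rw [hc0] at h00 h01 hdetM
        push_cast at h00 h01
        have ha2 : (a:ℝ)^2 * x = x := by linear_combination h00
        have ha2' : a^2 = 1 := by
          have : (a:ℝ)^2 = 1 := by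
            have h := mul_right_cancel₀ (ne_of_gt hx) (ha2.trans (one_mul x).symm)
            exact h
          exact_mod_cast this
        have haor : a = 1 ∨ a = -1 := by
          have : a * a = 1 := by linear_combination ha2'
          exact mul_self_eq_one_iff.mp this
        -- d² = 1
        have hadetor : a * d = 1 ∨ a * d = -1 := by
          simpa [hdetM] using hd
        have hd2 : d^2 = 1 := by
          have h2 : (a*d)^2 = 1 := by rcases hadetor with h | h <;> rw [h] <;> norm_num
          have h3 : a^2 * d^2 = 1 := by linear_combination h2
          linear_combination h3 - d^2 * ha2'
        have hdor : d = 1 ∨ d = -1 := by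
          have : d * d = 1 := by linear_combination hd2
          exact mul_self_eq_one_iff.mp this
        have hdabs : |(d:ℝ)| = 1 := by
          rcases hdor with h | h <;> rw [h] <;> simp
        -- b = 0
        have hb0 : b = 0 := by
          by_contra hb
          have hb1 : (1:ℝ) ≤ |(b:ℝ)| := by
            rw [← Int.cast_abs]
            exact_mod_cast Int.one_le_abs hb
          have hb2 : (1:ℝ) ≤ (b:ℝ)^2 := by
            nlinarith [abs_nonneg ((b:ℝ)), sq_abs ((b:ℝ))]
          have hd2r : (d:ℝ)^2 = 1 := by exact_mod_cast hd2
          have hlow : (b:ℝ)*(d:ℝ)*y ≥ -(|(b:ℝ)| * |y|) := by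
            have h1 := neg_abs_le ((b:ℝ)*(d:ℝ)*y)
            have h2 : |(b:ℝ)*(d:ℝ)*y| = |(b:ℝ)| * |y| := by
              rw [abs_mul, abs_mul, hdabs]; ring
            rw [h2] at h1
            linarith
          have e3 : (b:ℝ)^2*x + 2*((b:ℝ)*(d:ℝ)*y) + (d:ℝ)^2*z = z := by
            linear_combination h11
          rw [hd2r, ← sq_abs ((b:ℝ))] at e3
          have hbpos : (0:ℝ) < |(b:ℝ)| := lt_of_lt_of_le one_pos hb1
          have p1 : |(b:ℝ)| * (2*|y|) < |(b:ℝ)| * x := mul_lt_mul_of_pos_left hy' hbpos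
          have p3 : (0:ℝ) ≤ |(b:ℝ)|^2*x - |(b:ℝ)| * x := by
            nlinarith [mul_nonneg (mul_nonneg (sub_nonneg.mpr hb1) (abs_nonneg ((b:ℝ))))
              (le_of_lt hx)]
          linarith [e3, hlow, p1, p3]
        -- a*d = 1
        rw [hb0] at h01 hdetM
        push_cast at h01
        have had : (a:ℝ) * (d:ℝ) * y = y := by linear_combination h01
        have had1 : a * d = 1 := by
          have : ((a:ℝ) * (d:ℝ) - 1) * y = 0 := by linarith [had]
          rcases mul_eq_zero.mp this with h | h
          · have : (a:ℝ) * (d:ℝ) = 1 := by linarith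
            exact_mod_cast this
          · exact absurd h hy0
        have hda : d = a := by
          rcases haor with h | h <;> rw [h] at had1 ⊢ <;> omega
        -- conclude
        rcases haor with h | h
        · have hM1 : M = 1 := by
            rw [Matrix.eta_fin_two M, ← hadef, ← hbdef, ← hcdef, ← hddef,
              hb0, hc0, hda, h, Matrix.one_fin_two]
          rw [hM1]
          exact Set.mem_insert _ _
        · have hM2 : M = -1 := by
            rw [Matrix.eta_fin_two M, ← hadef, ← hbdef, ← hcdef, ← hddef,
              hb0, hc0, hda, h]
            ext i j
            fin_cases i <;> fin_cases j <;> simp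
          rw [hM2]
          exact Set.mem_insert_of_mem _ rfl
      · intro M hM
        rcases Set.mem_insert_iff.mp hM with h | h
        · rw [h]; exact hone
        · rw [Set.mem_singleton_iff] at h
          rw [h]; exact hnegone
    constructor
    · show A = A ∩ {M : Matrix (Fin 2) (Fin 2) ℤ | M.det = 1}
      apply Set.Subset.antisymm
      · intro M hM
        refine ⟨hM, ?_⟩
        rw [hset] at hM
        rcases Set.mem_insert_iff.mp hM with h | h
        · rw [h]; exact Matrix.det_one
        · rw [Set.mem_singleton_iff] at h
          rw [h]
          show (-1 : Matrix (Fin 2) (Fin 2) ℤ).det = 1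
          rw [Matrix.det_neg]; simp
      · exact Set.inter_subset_left
    · exact hset
end
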